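/- Let p : ℝ² → ℝ⁴ have polynomial components of total degree at most n whose four components sum to 1 identically (p is barycentric-valued), and let D = (d_{j,k}) satisfy B_j^m(p(s,t)) = Σ_{|k|=mn} d_{j,k} B_k^{mn}(s,t) for all (s,t) ∈ ℝ² and all |j| = m. Then every column of D sums to 1: for each multi-index k with |k| = mn, Σ_{|j|=m} d_{j,k} = 1. -/

import Mathlib

open MeasureTheory Finset

/-- The multinomial coefficient `n! / ∏ l, (i l)!` as a real number. -/
noncomputable def mcoef {L : ℕ} (n : ℕ) (i : Fin L → ℕ) : ℝ :=
  (n.factorial : ℝ) / ∏ l, ((i l).factorial : ℝ)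

/-- The Bernstein basis polynomial of degree `n` for the multi-index `i`,
as a function of barycentric coordinates `β : Fin L → ℝ`. -/
noncomputable def bern {L : ℕ} (n : ℕ) (i : Fin L → ℕ) (β : Fin L → ℝ) : ℝ :=
  mcoef n i * ∏ l, β l ^ i l

/-- The triangular Bernstein basis polynomial of degree `n` for a multi-index
`i : Fin 3 → ℕ`, as a function on `ℝ²`. -/
noncomputable def triBern (n : ℕ) (i : Fin 3 → ℕ) (x : ℝ × ℝ) : ℝ :=
  mcoef n i * (x.1 ^ i 0 * x.2 ^ i 1 * (1 - x.1 - x.2) ^ i 2)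

/-- The tetrahedral Bernstein basis polynomial of degree `m` for a multi-index
`j : Fin 4 → ℕ`, as a function on `ℝ⁴`. -/
noncomputable def tetBern (m : ℕ) (j : Fin 4 → ℕ) (u : Fin 4 → ℝ) : ℝ :=
  mcoef m j * ∏ l, u l ^ j l

/-- The standard triangle `Ω = {(s,t) : 0 ≤ s, 0 ≤ t, s + t ≤ 1}` in `ℝ²`. -/
def Omega : Set (ℝ × ℝ) := {x | 0 ≤ x.1 ∧ 0 ≤ x.2 ∧ x.1 + x.2 ≤ 1}

/-- `p : ℝ² → ℝ⁴` has components that are real polynomials in `(s,t)` of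
total degree at most `n`. -/
def PolyComponents (n : ℕ) (p : ℝ × ℝ → Fin 4 → ℝ) : Prop :=
  ∀ l : Fin 4, ∃ P : MvPolynomial (Fin 2) ℝ, P.totalDegree ≤ n ∧
    ∀ x : ℝ × ℝ, p x l = MvPolynomial.eval ![x.1, x.2] P


/-! Summing the defining identity of `D` over `j` and subtracting the partition of unity
`∑ₖ Bₖᵐⁿ = 1` shows that `∑ₖ (∑ⱼ d j k - 1) Bₖᵐⁿ` vanishes on `ℝ²`, since `∑ⱼ Bⱼᵐ (p x) = 1`.
So it suffices that the triangular Bernstein polynomials are linearly independent. In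
barycentric coordinates `∑ₖ eₖ Bₖᴺ` is a homogeneous polynomial of degree `N`; vanishing on
the plane `∑ u = 1`, it vanishes wherever `∑ u ≠ 0`, so its product with `∑ Xₗ` vanishes
everywhere, hence is the zero polynomial. Therefore the polynomial itself is zero and each
coefficient `eₖ · N!/k!` vanishes. -/

open MvPolynomial

lemma mcoef_eq_multinomial {L N : ℕ} {k : Fin L → ℕ} (hk : ∑ l, k l = N) :
    mcoef N k = Nat.multinomial univ k := by
  rw [mcoef, div_eq_iff (by positivity), ← hk, ← Nat.multinomial_spec]
  push_cast
  ring

lemma mcoef_pos {L : ℕ} (N : ℕ) (k : Fin L → ℕ) : 0 < mcoef N k := by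
  unfold mcoef
  positivity

lemma sum_bern_eq_pow_sum {L : ℕ} (N : ℕ) (u : Fin L → ℝ) :
    ∑ k ∈ Finset.Nat.antidiagonalTuple L N, bern N k u = (∑ l, u l) ^ N := by
  rw [sum_pow_eq_sum_piAntidiag, piAntidiag_univ_fin_eq_antidiagonalTuple]
  refine sum_congr rfl fun k hk => ?_
  rw [bern, mcoef_eq_multinomial (Finset.Nat.mem_antidiagonalTuple.mp hk)]

lemma bern_smul {L N : ℕ} {k : Fin L → ℕ} (hk : ∑ l, k l = N) (c : ℝ) (u : Fin L → ℝ) :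
    bern N k (c • u) = c ^ N * bern N k u := by
  simp only [bern, Pi.smul_apply, smul_eq_mul, mul_pow, prod_mul_distrib, prod_pow_eq_pow_sum, hk]
  ring

noncomputable def bernPoly {L : ℕ} (N : ℕ) (e : (Fin L → ℕ) → ℝ) : MvPolynomial (Fin L) ℝ :=
  ∑ k ∈ Finset.Nat.antidiagonalTuple L N,
    monomial (Finsupp.equivFunOnFinite.symm k) (e k * mcoef N k)

section bernPoly

variable {L N : ℕ} (e : (Fin L → ℕ) → ℝ)

lemma eval_bernPoly (u : Fin L → ℝ) :
    eval u (bernPoly N e) = ∑ k ∈ Finset.Nat.antidiagonalTuple L N, e k * bern N k u := by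
  rw [bernPoly, map_sum]
  refine sum_congr rfl fun k _ => ?_
  rw [eval_monomial, Finsupp.prod_fintype _ _ fun l => pow_zero _, bern]
  simp [mul_assoc]

lemma eval_smul_bernPoly (c : ℝ) (u : Fin L → ℝ) :
    eval (c • u) (bernPoly N e) = c ^ N * eval u (bernPoly N e) := by
  simp only [eval_bernPoly, mul_sum]
  refine sum_congr rfl fun k hk => ?_
  rw [bern_smul (Finset.Nat.mem_antidiagonalTuple.mp hk)]
  ring

lemma coeff_bernPoly {k : Fin L → ℕ} (hk : k ∈ Finset.Nat.antidiagonalTuple L N) :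
    coeff (Finsupp.equivFunOnFinite.symm k) (bernPoly N e) = e k * mcoef N k := by
  simp [bernPoly, coeff_sum, coeff_monomial, hk]

end bernPoly

lemma eq_zero_of_sum_mul_bern_eq_zero {L N : ℕ} (hL : L ≠ 0) (e : (Fin L → ℕ) → ℝ)
    (h : ∀ u : Fin L → ℝ, ∑ l, u l = 1 →
      ∑ k ∈ Finset.Nat.antidiagonalTuple L N, e k * bern N k u = 0) :
    ∀ k ∈ Finset.Nat.antidiagonalTuple L N, e k = 0 := by
  have hvanish : ∀ u : Fin L → ℝ, ∑ l, u l ≠ 0 → eval u (bernPoly N e) = 0 := by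
    intro u hu
    have hnorm : ∑ l, ((∑ l, u l)⁻¹ • u) l = 1 := by
      simp [← mul_sum, hu]
    rw [← one_smul ℝ u, ← mul_inv_cancel₀ hu, ← smul_smul, eval_smul_bernPoly,
      eval_bernPoly, h _ hnorm, mul_zero]
  have hsum : (∑ l, X l : MvPolynomial (Fin L) ℝ) ≠ 0 := fun h0 => by
    simpa [hL] using congrArg (eval fun _ => (1 : ℝ)) h0
  have hP : bernPoly N e = 0 := by
    refine (mul_eq_zero.mp (MvPolynomial.funext fun u => ?_)).resolve_right hsum
    by_cases hu : ∑ l, u l = 0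
    · simp [hu]
    · simp [hvanish u hu]
  intro k hk
  have hcoeff := coeff_bernPoly e hk
  rw [hP, coeff_zero] at hcoeff
  exact (mul_eq_zero.mp hcoeff.symm).resolve_right (mcoef_pos N k).ne'

lemma triBern_eq_bern (N : ℕ) (k : Fin 3 → ℕ) (x : ℝ × ℝ) :
    triBern N k x = bern N k ![x.1, x.2, 1 - x.1 - x.2] := by
  simp [triBern, bern, Fin.prod_univ_three]

lemma sum_triBern_eq_one (N : ℕ) (x : ℝ × ℝ) :
    ∑ k ∈ Finset.Nat.antidiagonalTuple 3 N, triBern N k x = 1 := by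
  simp [triBern_eq_bern, sum_bern_eq_pow_sum, Fin.sum_univ_three]

lemma sum_tetBern_eq_one (m : ℕ) {u : Fin 4 → ℝ} (hu : ∑ l, u l = 1) :
    ∑ j ∈ Finset.Nat.antidiagonalTuple 4 m, tetBern m j u = 1 := by
  rw [← one_pow m, ← hu]
  exact sum_bern_eq_pow_sum m u

lemma eq_zero_of_sum_mul_triBern_eq_zero {N : ℕ} (e : (Fin 3 → ℕ) → ℝ)
    (h : ∀ x : ℝ × ℝ, ∑ k ∈ Finset.Nat.antidiagonalTuple 3 N, e k * triBern N k x = 0) :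
    ∀ k ∈ Finset.Nat.antidiagonalTuple 3 N, e k = 0 := by
  refine eq_zero_of_sum_mul_bern_eq_zero three_ne_zero e fun u hu => ?_
  have hu' : ![u 0, u 1, 1 - u 0 - u 1] = u := by
    rw [Fin.sum_univ_three] at hu
    ext l
    fin_cases l <;> simp
    linarith
  simpa [triBern_eq_bern, hu'] using h (u 0, u 1)

theorem D_column_sums_one_general (n m : ℕ) (p : ℝ × ℝ → Fin 4 → ℝ)
    (hbar : ∀ x : ℝ × ℝ, ∑ l, p x l = 1)
    (d : (Fin 4 → ℕ) → (Fin 3 → ℕ) → ℝ)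
    (hD : ∀ j ∈ Finset.Nat.antidiagonalTuple 4 m, ∀ x : ℝ × ℝ,
      tetBern m j (p x) =
        ∑ k ∈ Finset.Nat.antidiagonalTuple 3 (m * n), d j k * triBern (m * n) k x) :
    ∀ k ∈ Finset.Nat.antidiagonalTuple 3 (m * n),
      ∑ j ∈ Finset.Nat.antidiagonalTuple 4 m, d j k = 1 := by
  intro k hk
  suffices ∑ j ∈ Finset.Nat.antidiagonalTuple 4 m, d j k - 1 = 0 by linarith
  refine eq_zero_of_sum_mul_triBern_eq_zero
    (fun k => ∑ j ∈ Finset.Nat.antidiagonalTuple 4 m, d j k - 1) (fun x => ?_) k hk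
  calc ∑ k ∈ Finset.Nat.antidiagonalTuple 3 (m * n),
        (∑ j ∈ Finset.Nat.antidiagonalTuple 4 m, d j k - 1) * triBern (m * n) k x
      = ∑ j ∈ Finset.Nat.antidiagonalTuple 4 m,
          ∑ k ∈ Finset.Nat.antidiagonalTuple 3 (m * n), d j k * triBern (m * n) k x
        - ∑ k ∈ Finset.Nat.antidiagonalTuple 3 (m * n), triBern (m * n) k x := by
        simp only [sub_mul, sum_sub_distrib, sum_mul, one_mul]
        rw [sum_comm]
    _ = ∑ j ∈ Finset.Nat.antidiagonalTuple 4 m, tetBern m j (p x) - 1 := by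
        rw [sum_congr rfl fun j hj => (hD j hj x).symm, sum_triBern_eq_one]
    _ = 0 := by rw [sum_tetBern_eq_one m (hbar x), sub_self]

/-- if `p` is barycentric-valued then every column of `D` sums
to `1`. -/
theorem D_column_sums_one (n m : ℕ) (p : ℝ × ℝ → Fin 4 → ℝ)
    (hp : PolyComponents n p) (hbar : ∀ x : ℝ × ℝ, ∑ l, p x l = 1)
    (d : (Fin 4 → ℕ) → (Fin 3 → ℕ) → ℝ)
    (hD : ∀ j ∈ Finset.Nat.antidiagonalTuple 4 m, ∀ x : ℝ × ℝ,
      tetBern m j (p x) =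
        ∑ k ∈ Finset.Nat.antidiagonalTuple 3 (m * n), d j k * triBern (m * n) k x) :
    ∀ k ∈ Finset.Nat.antidiagonalTuple 3 (m * n),
      ∑ j ∈ Finset.Nat.antidiagonalTuple 4 m, d j k = 1 :=
  D_column_sums_one_general n m p hbar d hD
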